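/- Fix 1 < p < ∞ and define f : ℓ_p → ℝ by f(x) = exp(−‖x‖_p^p). Then for every n ∈ ℕ, every compact set Ω ⊂ ℝⁿ and every ε > 0, there exist α > 0 and an injective affine map T : ℝⁿ → ℓ_p such that sup_{x∈Ω} | α f(T x) − φ_n(x) | < ε. -/

import Mathlib

/-!
Let `Tx ∈ ℓ_p` be the finitely supported sequence listing `N` copies of the `2n` numbers
`1 ± δ xⱼ`; it is affine and injective in `x`. Then `‖Tx‖_p^p = N ∑ⱼ (|1 + δxⱼ|^p + |1 - δxⱼ|^p)`, and the second-order expansion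
`|1 + t|^p + |1 - t|^p = 2 + p(p-1)t² + o(t²)` shows that, when `Nδ² = 1/(2p(p-1))` and `N → ∞`,
`‖Tx‖_p^p - 2Nn → ‖x‖²/2` uniformly on bounded sets. The constant `2Nn` is absorbed by
`α = (2π)^{-n/2} e^{2Nn}`.
-/

open Real Filter Topology Function Asymptotics
open scoped ENNReal

noncomputable def gaussDensity (k : ℕ) (x : EuclideanSpace ℝ (Fin k)) : ℝ :=
  (2 * Real.pi) ^ (-(k : ℝ) / 2) * Real.exp (-‖x‖ ^ 2 / 2)

theorem isLittleO_abs_one_add_rpow_add_abs_one_sub_rpow (p : ℝ) :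
    (fun t : ℝ => |1 + t| ^ p + |1 - t| ^ p - 2 - p * (p - 1) * t ^ 2) =o[𝓝 0] fun t => t ^ 2 := by
  set I := Set.Ioo (-1 : ℝ) 1
  have hI : I ∈ 𝓝 0 := Ioo_mem_nhds (by norm_num) (by norm_num)
  have hplus (q : ℝ) {t : ℝ} (ht : t ∈ I) :
      HasDerivAt (fun t => (1 + t) ^ q) (q * (1 + t) ^ (q - 1)) t := by
    simpa using ((hasDerivAt_id' t).const_add 1).rpow_const (p := q) (Or.inl (by linarith [ht.1]))
  have hminus (q : ℝ) {t : ℝ} (ht : t ∈ I) :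
      HasDerivAt (fun t => (1 - t) ^ q) (-(q * (1 - t) ^ (q - 1))) t := by
    simpa using ((hasDerivAt_id' t).const_sub 1).rpow_const (p := q) (Or.inl (by linarith [ht.2]))
  set F' : ℝ → ℝ := fun t => p * (1 + t) ^ (p - 1) - p * (1 - t) ^ (p - 1) - 2 * p * (p - 1) * t
  have hF : ∀ t ∈ I, HasDerivWithinAt
      (fun t => (1 + t) ^ p + (1 - t) ^ p - p * (p - 1) * t ^ 2) (F' t) I t := by
    intro t ht
    refine ((((hplus p ht).add (hminus p ht)).sub
      ((hasDerivAt_pow 2 t).const_mul (p * (p - 1)))).congr_deriv ?_).hasDerivWithinAt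
    simp only [F']
    push_cast
    ring
  have hF'0 : HasDerivAt F' 0 0 := by
    have h0 : (0 : ℝ) ∈ I := by norm_num [I]
    refine ((((hplus (p - 1) h0).const_mul p).sub ((hminus (p - 1) h0).const_mul p)).sub
      ((hasDerivAt_id' 0).const_mul (2 * p * (p - 1)))).congr_deriv ?_
    norm_num
    ring
  -- `F'(0) = F''(0) = 0`, and the mean value theorem integrates `F' = o(t)` to `F - F(0) = o(t²)`.
  have hF'o : F' =o[𝓝[I] 0] fun t => (t - 0) ^ 1 := by
    rw [nhdsWithin_eq_nhds.2 hI]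
    simpa [F'] using hasDerivAt_iff_isLittleO.1 hF'0
  have key := Convex.isLittleO_pow_succ_real (convex_Ioo (-1) 1) (by norm_num) hF hF'o
  rw [nhdsWithin_eq_nhds.2 hI] at key
  refine key.congr' ?_ (by simp)
  filter_upwards [hI] with t ht
  rw [abs_of_pos (by linarith [ht.1]), abs_of_pos (by linarith [ht.2])]
  norm_num
  ring

theorem tendstoUniformlyOn_mul_sum_abs_one_add_rpow_add_abs_one_sub_rpow
    {ι β : Type*} [Fintype ι] {l : Filter β} {c δ : β → ℝ} {κ : ℝ} (p R : ℝ)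
    (hδ : Tendsto δ l (𝓝 0)) (hc : ∀ᶠ b in l, c b * δ b ^ 2 = κ) :
    TendstoUniformlyOn
      (fun b (x : EuclideanSpace ℝ ι) =>
        c b * ∑ j, (|1 + δ b * x j| ^ p + |1 - δ b * x j| ^ p - 2))
      (fun x => κ * (p * (p - 1)) * ‖x‖ ^ 2) l (Metric.closedBall 0 R) := by
  set G : ℝ → ℝ := fun t => |1 + t| ^ p + |1 - t| ^ p - 2 - p * (p - 1) * t ^ 2
  rw [Metric.tendstoUniformlyOn_iff]
  intro ε hε
  set η := ε / (|κ| * R ^ 2 + 1)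
  have hη : 0 < η := by positivity
  have hκη : |κ| * η * R ^ 2 < ε := by
    rw [show |κ| * η * R ^ 2 = ε * (|κ| * R ^ 2 / (|κ| * R ^ 2 + 1)) by simp only [η]; ring]
    exact mul_lt_of_lt_one_right hε ((div_lt_one (by positivity)).2 (lt_add_one _))
  obtain ⟨d, hd, hG⟩ := Metric.eventually_nhds_iff.1
    ((isLittleO_abs_one_add_rpow_add_abs_one_sub_rpow p).def hη)
  have hδR : Tendsto (fun b => δ b * R) l (𝓝 0) := by simpa using hδ.mul_const R
  filter_upwards [hc, Metric.tendsto_nhds.1 hδR d hd] with b hcb hδb x hx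
  rw [mem_closedBall_zero_iff] at hx
  have hsmall (j : ι) : |G (δ b * x j)| ≤ η * (δ b * x j) ^ 2 := by
    refine (hG ?_).trans_eq (by rw [Real.norm_of_nonneg (sq_nonneg _)])
    rw [Real.dist_eq, sub_zero] at hδb ⊢
    calc |δ b * x j| = |δ b| * |x j| := abs_mul _ _
      _ ≤ |δ b| * R := mul_le_mul_of_nonneg_left ((PiLp.norm_apply_le x j).trans hx) (abs_nonneg _)
      _ ≤ |δ b * R| := by rw [abs_mul]; exact mul_le_mul_of_nonneg_left (le_abs_self R) (abs_nonneg _)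
      _ < d := hδb
  have hsum : c b * ∑ j, (|1 + δ b * x j| ^ p + |1 - δ b * x j| ^ p - 2)
      - κ * (p * (p - 1)) * ‖x‖ ^ 2 = c b * ∑ j, G (δ b * x j) := by
    simp only [G, EuclideanSpace.real_norm_sq_eq, ← hcb, Finset.mul_sum, ← Finset.sum_sub_distrib]
    exact Finset.sum_congr rfl fun j _ => by ring
  rw [dist_comm, Real.dist_eq, hsum]
  calc |c b * ∑ j, G (δ b * x j)| ≤ |c b| * ∑ j, η * (δ b * x j) ^ 2 := by
        rw [abs_mul]
        exact mul_le_mul_of_nonneg_left ((Finset.abs_sum_le_sum_abs _ _).trans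
          (Finset.sum_le_sum fun j _ => hsmall j)) (abs_nonneg _)
    _ = |κ| * η * ‖x‖ ^ 2 := by
        simp only [← hcb, EuclideanSpace.real_norm_sq_eq, abs_mul, Finset.mul_sum, abs_pow, sq_abs]
        exact Finset.sum_congr rfl fun j _ => by ring
    _ ≤ |κ| * η * R ^ 2 := by gcongr
    _ < ε := hκη

namespace lp

theorem tsum_abs_rpow_eq_norm_rpow {α : Type*} {p : ℝ} (hp : 0 < p)
    (f : lp (fun _ : α => ℝ) (ENNReal.ofReal p)) : ∑' i, |f i| ^ p = ‖f‖ ^ p := by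
  have h := lp.norm_rpow_eq_tsum (by rwa [ENNReal.toReal_ofReal hp.le]) f
  simp only [ENNReal.toReal_ofReal hp.le, Real.norm_eq_abs] at h
  exact h.symm

variable {ι α : Type*} [Fintype ι] [DecidableEq α] (q : ℝ≥0∞) (e : ι → α)

noncomputable def extendByZero : (ι → ℝ) →ₗ[ℝ] lp (fun _ : α => ℝ) q :=
  ∑ i, (lp.lsingle q (e i)).comp (LinearMap.proj i)

theorem extendByZero_apply (w : ι → ℝ) :
    extendByZero q e w = ∑ i, lp.single q (e i) (w i) := by
  simp [extendByZero]

variable {e}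

theorem extendByZero_apply_apply (he : Injective e) (w : ι → ℝ) (i : ι) :
    extendByZero q e w (e i) = w i := by
  rw [extendByZero_apply, lp.coeFn_sum, Finset.sum_apply, Finset.sum_eq_single i
    (fun j _ hji => lp.single_apply_ne q _ _ (he.ne hji.symm)) (by simp), lp.single_apply_self]

theorem extendByZero_injective (he : Injective e) : Injective (extendByZero q e) :=
  fun w w' h => funext fun i => by
    rw [← extendByZero_apply_apply q he w, h, extendByZero_apply_apply q he]

theorem norm_extendByZero_rpow (he : Injective e) (hq : 0 < q.toReal) (w : ι → ℝ) :
    ‖extendByZero q e w‖ ^ q.toReal = ∑ i, |w i| ^ q.toReal := by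
  have h := lp.norm_sum_single (E := fun _ : α => ℝ) hq (extend e w 0) (Finset.univ.map ⟨e, he⟩)
  simp only [Finset.sum_map, Embedding.coeFn_mk, he.extend_apply, Real.norm_eq_abs] at h
  rw [extendByZero_apply, h]

end lp

noncomputable def signedCopies (κ ι : Type*) : EuclideanSpace ℝ ι →ₗ[ℝ] (κ × (ι ⊕ ι) → ℝ) where
  toFun x i := Sum.elim (fun j => x j) (fun j => -x j) i.2
  map_add' x y := by ext ⟨_, j | j⟩ <;> simp [add_comm]
  map_smul' c x := by ext ⟨_, j | j⟩ <;> simp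

theorem signedCopies_injective {κ ι : Type*} [Nonempty κ] : Injective (signedCopies κ ι) := by
  intro x y h
  ext j
  simpa [signedCopies] using congrFun h (Classical.arbitrary κ, .inl j)

theorem exists_injective_linearMap_tsum_abs_add_rpow_eq {p : ℝ} (hp : 0 < p) (n N : ℕ) [NeZero N]
    {δ : ℝ} (hδ : δ ≠ 0) :
    ∃ L : EuclideanSpace ℝ (Fin n) →ₗ[ℝ] lp (fun _ : ℕ => ℝ) (ENNReal.ofReal p), Injective L ∧
      ∃ v : lp (fun _ : ℕ => ℝ) (ENNReal.ofReal p), ∀ x,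
        ∑' i, |(L x + v) i| ^ p = N * ∑ j, (|1 + δ * x j| ^ p + |1 - δ * x j| ^ p) := by
  set q := ENNReal.ofReal p
  have hq : q.toReal = p := ENNReal.toReal_ofReal hp.le
  set ι := Fin N × (Fin n ⊕ Fin n)
  set e : ι → ℕ := fun i => Fintype.equivFin ι i
  have he : Injective e := Fin.val_injective.comp (Fintype.equivFin ι).injective
  refine ⟨δ • (lp.extendByZero q e ∘ₗ signedCopies (Fin N) (Fin n)),
    (smul_right_injective _ hδ).comp ((lp.extendByZero_injective q he).comp signedCopies_injective),
    lp.extendByZero q e 1, fun x => ?_⟩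
  have hsum : (δ • (lp.extendByZero q e ∘ₗ signedCopies (Fin N) (Fin n))) x + lp.extendByZero q e 1
      = lp.extendByZero q e (δ • signedCopies (Fin N) (Fin n) x + 1) := by
    simp
  have hnorm := lp.norm_extendByZero_rpow q he (hq ▸ hp) (δ • signedCopies (Fin N) (Fin n) x + 1)
  rw [hq] at hnorm
  rw [hsum, lp.tsum_abs_rpow_eq_norm_rpow hp, hnorm]
  simp only [ι, Fintype.sum_prod_type, Fintype.sum_sum_type, ← Finset.sum_add_distrib]
  simp [signedCopies, add_comm, ← sub_eq_add_neg]

theorem abs_exp_neg_sub_exp_neg_le {a b : ℝ} (hb : 0 ≤ b) (hab : |a - b| ≤ 1) :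
    |exp (-a) - exp (-b)| ≤ 2 * |a - b| := by
  have hfactor : exp (-a) - exp (-b) = exp (-b) * (exp (b - a) - 1) := by
    rw [mul_sub, ← exp_add]
    ring_nf
  calc |exp (-a) - exp (-b)| = exp (-b) * |exp (b - a) - 1| := by
        rw [hfactor, abs_mul, abs_of_pos (exp_pos _)]
    _ ≤ 1 * (2 * |b - a|) :=
        mul_le_mul (exp_le_one_iff.2 (by linarith)) (abs_exp_sub_one_le (by rwa [abs_sub_comm]))
          (abs_nonneg _) zero_le_one
    _ = 2 * |a - b| := by rw [one_mul, abs_sub_comm]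

theorem abs_mul_exp_neg_sub_gaussDensity_le {n : ℕ} (x : EuclideanSpace ℝ (Fin n)) {a : ℝ}
    (ha : |a - ‖x‖ ^ 2 / 2| ≤ 1) :
    |(2 * π) ^ (-(n : ℝ) / 2) * exp (-a) - gaussDensity n x|
      ≤ (2 * π) ^ (-(n : ℝ) / 2) * (2 * |a - ‖x‖ ^ 2 / 2|) := by
  rw [gaussDensity, neg_div (2 : ℝ) (‖x‖ ^ 2), ← mul_sub, abs_mul, abs_of_pos (by positivity)]
  gcongr
  exact abs_exp_neg_sub_exp_neg_le (by positivity) ha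

/-- Corollary in the paper. For `1 < p < ∞` and
`f : ℓ_p → ℝ`, `f(x) = exp(-‖x‖_p^p) = exp(-∑ᵢ |xᵢ|^p)`: for every `n`, every compact
`Ω ⊂ ℝⁿ` and every `ε > 0`, there are `α > 0` and an injective affine map
`T = L + v : ℝⁿ → ℓ_p` with `sup_{x ∈ Ω} |α f(Tx) - φ_n(x)| < ε`. -/
theorem section_clt_lp (p : ℝ) (hp : 1 < p) (n : ℕ)
    (Ω : Set (EuclideanSpace ℝ (Fin n))) (hΩ : IsCompact Ω) (ε : ℝ) (hε : 0 < ε) :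
    ∃ α > (0 : ℝ),
      ∃ L : EuclideanSpace ℝ (Fin n) →ₗ[ℝ] lp (fun _ : ℕ => ℝ) (ENNReal.ofReal p),
        Function.Injective L ∧
        ∃ v : lp (fun _ : ℕ => ℝ) (ENNReal.ofReal p),
          ∀ x ∈ Ω,
            |α * Real.exp (-(∑' i : ℕ, |(L x + v : lp (fun _ : ℕ => ℝ) (ENNReal.ofReal p)) i| ^ p))
              - gaussDensity n x| < ε := by
  have hp₀ : 0 < p := by linarith
  obtain ⟨R, hΩR⟩ := hΩ.isBounded.subset_closedBall 0
  set c : ℝ := (2 * π) ^ (-(n : ℝ) / 2)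
  have hc : 0 < c := by positivity
  set κ : ℝ := (2 * (p * (p - 1)))⁻¹
  set δ : ℕ → ℝ := fun N => √(κ / N)
  have hδ : Tendsto δ atTop (𝓝 0) := by
    simpa only [sqrt_zero] using (tendsto_const_div_atTop_nhds_zero_nat κ).sqrt
  have hNδ : ∀ᶠ N : ℕ in atTop, (N : ℝ) * δ N ^ 2 = κ := by
    filter_upwards [eventually_ne_atTop 0] with N hN
    rw [sq_sqrt (by positivity)]
    field_simp
  obtain ⟨N, hN, hN₀⟩ := ((Metric.tendstoUniformlyOn_iff.1
    (tendstoUniformlyOn_mul_sum_abs_one_add_rpow_add_abs_one_sub_rpow (ι := Fin n) p R hδ hNδ)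
    (min 1 (ε / (2 * c))) (by positivity)).and (eventually_gt_atTop 0)).exists
  have : NeZero N := ⟨hN₀.ne'⟩
  obtain ⟨L, hL, v, hLv⟩ :=
    exists_injective_linearMap_tsum_abs_add_rpow_eq hp₀ n N (δ := δ N) (by positivity)
  refine ⟨c * exp (2 * N * n), by positivity, L, hL, v, fun x hx => ?_⟩
  set a := (N : ℝ) * ∑ j, (|1 + δ N * x j| ^ p + |1 - δ N * x j| ^ p - 2)
  have hab : |a - ‖x‖ ^ 2 / 2| < min 1 (ε / (2 * c)) := by
    have hxN := hN x (hΩR hx)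
    rwa [dist_comm, Real.dist_eq, show κ * (p * (p - 1)) * ‖x‖ ^ 2 = ‖x‖ ^ 2 / 2 by
      simp only [κ]; field_simp [hp₀.ne', (sub_pos.2 hp).ne']] at hxN
  have hα : c * exp (2 * N * n) * exp (-∑' i, |(L x + v) i| ^ p) = c * exp (-a) := by
    rw [hLv, mul_assoc, ← exp_add]
    congr 2
    simp only [a, Finset.sum_sub_distrib, Finset.sum_const, Finset.card_univ, Fintype.card_fin,
      nsmul_eq_mul]
    ring
  rw [hα]
  calc _ ≤ c * (2 * |a - ‖x‖ ^ 2 / 2|) :=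
        abs_mul_exp_neg_sub_gaussDensity_le x (hab.le.trans (min_le_left _ _))
    _ < c * (2 * (ε / (2 * c))) := by gcongr; exact hab.trans_le (min_le_right _ _)
    _ = ε := by field_simp [hc.ne']
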